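/- For all p > 1, all δ ≥ 0 and all t ≥ 0 one has φ(2t) ≤ 2^{max{2,p}}·φ(t); i.e., φ satisfies the Δ₂-condition with a constant depending only on p, uniformly in δ. -/

import Mathlib

/-!
Substituting `s = 2u` gives `φ(2t) = 2 ∫₀ᵗ (δ+2u)^(p-2)·2u du`, and pointwise
`(δ+2u)^(p-2) ≤ 2^(max (p-2) 0)·(δ+u)^(p-2)`: for `p ≥ 2` because `δ+2u ≤ 2(δ+u)`,
for `p < 2` because `δ+u ≤ δ+2u` and the power is antitone.
-/

open Real Set MeasureTheory

theorem rpow_add_mul_le_rpow_add {δ u c q : ℝ} (hδ : 0 ≤ δ) (hu : 0 ≤ u) (hc : 1 ≤ c) :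
    (δ + c * u) ^ q ≤ c ^ max q 0 * (δ + u) ^ q := by
  have hle : δ + u ≤ δ + c * u := by nlinarith
  rcases le_total 0 q with hq | hq
  · calc (δ + c * u) ^ q ≤ (c * (δ + u)) ^ q := by gcongr; nlinarith
      _ = c ^ max q 0 * (δ + u) ^ q := by
        rw [max_eq_left hq, mul_rpow (by linarith) (by linarith)]
  · rw [max_eq_right hq, rpow_zero, one_mul]
    rcases (add_nonneg hδ hu).eq_or_lt with h0 | hpos
    · obtain ⟨rfl, rfl⟩ : δ = 0 ∧ u = 0 := ⟨by linarith, by linarith⟩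
      simp
    · exact rpow_le_rpow_of_nonpos hpos hle hq

theorem intervalIntegrable_add_rpow_sub_two_mul_self {p δ a : ℝ} (hp : 1 ≤ p) (hδ : 0 ≤ δ)
    (ha : 0 ≤ a) : IntervalIntegrable (fun s => (δ + s) ^ (p - 2) * s) volume 0 a := by
  rcases hδ.eq_or_lt with rfl | hδ
  · have hc : Continuous fun s : ℝ => s ^ (p - 1) :=
      continuous_id.rpow_const fun _ => Or.inr (by linarith)
    refine hc.intervalIntegrable 0 a |>.congr fun s hs => ?_
    rw [uIoc_of_le ha] at hs
    simp only [zero_add]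
    rw [show p - 1 = p - 2 + 1 by ring, rpow_add_one hs.1.ne']
  · refine ContinuousOn.intervalIntegrable ?_
    refine ((continuousOn_const.add continuousOn_id).rpow_const fun x hx => ?_).mul continuousOn_id
    rw [uIcc_of_le ha] at hx
    exact Or.inl (show δ + x ≠ 0 by linarith [hx.1])

theorem integral_le_of_comp_mul_le {f : ℝ → ℝ} {c K t : ℝ} (hc : 0 < c) (ht : 0 ≤ t)
    (hf : IntervalIntegrable f volume 0 (c * t)) (hf' : IntervalIntegrable f volume 0 t)
    (h : ∀ u ∈ Icc 0 t, f (c * u) ≤ K * f u) :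
    ∫ s in (0:ℝ)..c * t, f s ≤ c * K * ∫ s in (0:ℝ)..t, f s := by
  have hfc : IntervalIntegrable (fun u => f (c * u)) volume 0 t := by
    simpa [hc.ne'] using hf.comp_mul_left (c := c)
  calc ∫ s in (0:ℝ)..c * t, f s = c * ∫ u in (0:ℝ)..t, f (c * u) := by
        simp [hc.ne']
    _ ≤ c * ∫ u in (0:ℝ)..t, K * f u :=
        mul_le_mul_of_nonneg_left (intervalIntegral.integral_mono_on ht hfc (hf'.const_mul K) h)
          hc.le
    _ = c * K * ∫ s in (0:ℝ)..t, f s := by rw [intervalIntegral.integral_const_mul, mul_assoc]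

theorem stmt2 (p δ t : ℝ) (hp : 1 < p) (hδ : 0 ≤ δ) (ht : 0 ≤ t) :
    (∫ s in (0:ℝ)..(2 * t), (δ + s) ^ (p - 2) * s)
      ≤ (2 : ℝ) ^ (max 2 p) * ∫ s in (0:ℝ)..t, (δ + s) ^ (p - 2) * s := by
  have hconst : (2 : ℝ) ^ max 2 p = 2 * (2 ^ max (p - 2) 0 * 2) := by
    have hmax : max 2 p = max (p - 2) 0 + 1 + 1 := by
      rcases le_total 2 p with h | h <;> simp [h] <;> linarith
    rw [hmax, rpow_add_one two_ne_zero, rpow_add_one two_ne_zero]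
    ring
  rw [hconst]
  refine integral_le_of_comp_mul_le two_pos ht
    (intervalIntegrable_add_rpow_sub_two_mul_self hp.le hδ (by linarith))
    (intervalIntegrable_add_rpow_sub_two_mul_self hp.le hδ ht) fun u hu => ?_
  calc (δ + 2 * u) ^ (p - 2) * (2 * u)
      ≤ 2 ^ max (p - 2) 0 * (δ + u) ^ (p - 2) * (2 * u) := by
        gcongr
        · linarith [hu.1]
        · exact rpow_add_mul_le_rpow_add hδ hu.1 one_le_two
    _ = 2 ^ max (p - 2) 0 * 2 * ((δ + u) ^ (p - 2) * u) := by ring
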